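/- For all positive integers k and l, the greatest common divisor (in the polynomial ring ℚ[q], up to units) of the polynomials S_{k−1}(q) and S_{l−1}(q) is S_{gcd(k,l)−1}(q). -/

import Mathlib

noncomputable def SP : ℕ → Polynomial ℚ
  | 0 => 1
  | 1 => Polynomial.X
  | (n + 2) => Polynomial.X * SP (n + 1) - SP n

/-!
With `F n = S (n - 1)` (so `F 0 = S (-1) = 0`), the addition formula
`S (a + b) = S a * S b - S (a - 1) * S (b - 1)` reads `F (n + m) = F (m + 1) * F n - F m * F (n - 1)`,
and consecutive terms are coprime by the Cassini-type identity
`S n ^ 2 + S (n + 1) ^ 2 - X * S n * S (n + 1) = 1`. Hence for `d ∣ F m` we get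
`d ∣ F (n + m) ↔ d ∣ F n`, so the common divisors of `F k` and `F l` are unchanged by the steps of
the Euclidean algorithm on `(k, l)` and are exactly the divisors of `F (gcd k l)`.
-/

namespace Polynomial.Chebyshev

variable (R : Type*) [CommRing R]

theorem S_add (a b : ℤ) : S R (a + b) = S R a * S R b - S R (a - 1) * S R (b - 1) := by
  induction a using Chebyshev.induct with
  | zero => simp
  | one => simpa [add_comm] using S_add_one R b
  | add_two n h₁ h₀ =>
    linear_combination (norm := ring_nf) S_add_two R (n + b) + X * h₁ - h₀ -
      S R b * S_add_two R n + S R (b - 1) * S_add_one R n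
  | neg_add_one n h₀ h₁ =>
    linear_combination (norm := ring_nf) S_sub_one R (-n + b) + X * h₀ - h₁ -
      S R b * S_sub_one R (-n) + S R (b - 1) * S_sub_two R (-n)

theorem isCoprime_S_S_add_one (n : ℤ) : IsCoprime (S R n) (S R (n + 1)) :=
  ⟨S R n - X * S R (n + 1), S R (n + 1), by linear_combination S_sq_add_S_sq R n⟩

variable {R}

theorem dvd_S_add_sub_one_iff {d : R[X]} {m : ℤ} (hd : d ∣ S R (m - 1)) (n : ℤ) :
    d ∣ S R (n + m - 1) ↔ d ∣ S R (n - 1) := by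
  have hcop : IsCoprime d (S R m) := by
    simpa using (isCoprime_S_S_add_one R (m - 1)).of_isCoprime_of_dvd_left hd
  have h : S R (n + m - 1) = S R m * S R (n - 1) - S R (m - 1) * S R (n - 2) := by
    rw [show n + m - 1 = m + (n - 1) by ring, S_add]
    ring_nf
  rw [h, dvd_sub_left (hd.mul_right _)]
  exact ⟨hcop.dvd_of_dvd_mul_left, fun hn => hn.mul_left _⟩

theorem dvd_S_add_mul_sub_one_iff {d : R[X]} {m : ℤ} (hd : d ∣ S R (m - 1)) (n : ℤ) (q : ℕ) :
    d ∣ S R (n + q * m - 1) ↔ d ∣ S R (n - 1) := by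
  induction q with
  | zero => simp
  | succ q ih =>
    rw [← ih, ← dvd_S_add_sub_one_iff hd (n + q * m)]
    push_cast
    ring_nf

theorem dvd_S_gcd_sub_one_iff (d : R[X]) (k l : ℕ) :
    d ∣ S R (k.gcd l - 1) ↔ d ∣ S R (k - 1) ∧ d ∣ S R (l - 1) := by
  induction k, l using Nat.gcd.induction with
  | H0 l => simp
  | H1 k l _ ih =>
    rw [Nat.gcd_rec, ih, and_comm, and_congr_right_iff]
    intro hd
    have hmod : ((l % k : ℕ) : ℤ) + (l / k : ℕ) * k = l := mod_cast Nat.mod_add_div' l k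
    rw [← dvd_S_add_mul_sub_one_iff hd (l % k : ℕ) (l / k), hmod]

end Polynomial.Chebyshev

open Polynomial.Chebyshev

theorem SP_eq_S (n : ℕ) : SP n = S ℚ n := by
  induction n using Nat.twoStepInduction with
  | zero => simp [SP]
  | one => simp [SP]
  | more n h₀ h₁ =>
    rw [SP, h₀, h₁]
    push_cast
    rw [S_add_two]

theorem SP_sub_one {n : ℕ} (hn : 0 < n) : SP (n - 1) = S ℚ (n - 1) := by
  rw [SP_eq_S, Nat.cast_sub hn, Nat.cast_one]

theorem stmt_14 (k l : ℕ) (hk : 0 < k) (hl : 0 < l) :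
    Associated (EuclideanDomain.gcd (SP (k - 1)) (SP (l - 1)))
      (SP (Nat.gcd k l - 1)) := by
  rw [SP_sub_one hk, SP_sub_one hl, SP_sub_one (Nat.gcd_pos_of_pos_left l hk)]
  obtain ⟨hk_dvd, hl_dvd⟩ := (dvd_S_gcd_sub_one_iff (R := ℚ) _ k l).1 dvd_rfl
  exact associated_of_dvd_dvd
    ((dvd_S_gcd_sub_one_iff _ k l).2
      ⟨EuclideanDomain.gcd_dvd_left _ _, EuclideanDomain.gcd_dvd_right _ _⟩)
    (EuclideanDomain.dvd_gcd hk_dvd hl_dvd)
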